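/- In diagonal peg solitaire on the 6×6 board, any solution to the b2-complement (vacate b2, finish at b2) requires at least 13 moves: the board partitions into 12 single-or-multi-hole Merson edge regions plus the interior, each edge region needs a move whose first jump is the first to leave it, and the first move must be made by a peg from the interior (refilling b2), giving 12 + 1 = 13 moves minimum. -/

import Mathlib

abbrev Pos := Finset (ℤ × ℤ)

def mid (a c : ℤ × ℤ) : ℤ × ℤ := ((a.1 + c.1) / 2, (a.2 + c.2) / 2)

def steps : Finset (ℤ × ℤ) := {(2, 0), (-2, 0), (0, 2), (0, -2), (2, 2), (2, -2), (-2, 2), (-2, -2)}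

/-- The jump from `a` to `c` (over `mid a c`) is legal on board `Bd` in position `S`. -/
def LegalJump (Bd S : Pos) (a c : ℤ × ℤ) : Prop :=
  c - a ∈ steps ∧ a ∈ Bd ∧ mid a c ∈ Bd ∧ c ∈ Bd ∧ a ∈ S ∧ mid a c ∈ S ∧ c ∉ S

def doJump (S : Pos) (a c : ℤ × ℤ) : Pos := insert c ((S.erase a).erase (mid a c))

/-- `Plays Bd S js S'`: executing the list of jumps `js` (each legal) from `S` yields `S'`. -/
inductive Plays (Bd : Pos) : Pos → List ((ℤ × ℤ) × (ℤ × ℤ)) → Pos → Prop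
  | nil (S : Pos) : Plays Bd S [] S
  | cons {S S' : Pos} {js : List ((ℤ × ℤ) × (ℤ × ℤ))} {a c : ℤ × ℤ} :
      LegalJump Bd S a c → Plays Bd (doJump S a c) js S' → Plays Bd S ((a, c) :: js) S'

/-- A move: a nonempty chain of jumps by one peg (each jump starts where the previous landed). -/
def IsChainMove (mv : List ((ℤ × ℤ) × (ℤ × ℤ))) : Prop :=
  mv ≠ [] ∧ List.Chain' (fun j1 j2 => j2.1 = j1.2) mv

noncomputable def board6 : Pos := (Finset.Icc (0 : ℤ) 5) ×ˢ (Finset.Icc (0 : ℤ) 5)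

/-!
Call a set `R` of squares a Merson region if a jump that starts outside `R` and removes a peg
of `R` must land in `R`. While `R` is full no jump can land in it, so the first move that
leaves a hole in a full Merson region must start inside it, with its first jump. The twelve
disjoint edge regions below are Merson regions for the diagonal game; all are full at the
start of the b2-complement and none survives to the end, so twelve moves start in twelve
different regions. The first move fills b2 from d2, b4 or d4, which lie in no region, so it
is a thirteenth move.
-/

open Function

def IsMersonRegion (Bd R : Pos) : Prop :=
  ∀ a ∈ Bd, ∀ s ∈ steps, a + s ∈ Bd → mid a (a + s) ∈ R → a ∉ R → a + s ∈ R

theorem IsMersonRegion.subset_doJump {Bd R S : Pos} {a c : ℤ × ℤ} (hR : IsMersonRegion Bd R)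
    (hj : LegalJump Bd S a c) (hRS : R ⊆ S) (ha : a ∉ R) : R ⊆ doJump S a c := by
  obtain ⟨hs, haB, -, hcB, -, -, hcS⟩ := hj
  have hac : a + (c - a) = c := add_sub_cancel a c
  have hm : mid a c ∉ R := fun hm ↦ by
    have := hR a haB _ hs
    rw [hac] at this
    exact hcS (hRS (this hcB hm ha))
  intro x hx
  refine Finset.mem_insert_of_mem (Finset.mem_erase.2 ⟨?_, Finset.mem_erase.2 ⟨?_, hRS hx⟩⟩)
  · rintro rfl; exact hm hx
  · rintro rfl; exact ha hx

/-- The region cannot be entered later in the move: each jump after the first starts on the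
square where the previous one landed, which was empty, hence outside the full region. -/
theorem IsMersonRegion.subset_of_plays {Bd R S S' : Pos} {js : List ((ℤ × ℤ) × (ℤ × ℤ))}
    (hR : IsMersonRegion Bd R) (hp : Plays Bd S js S')
    (hch : List.IsChain (fun j1 j2 => j2.1 = j1.2) js) (hRS : R ⊆ S)
    (hhead : ∀ j ∈ js.head?, j.1 ∉ R) : R ⊆ S' := by
  induction hp with
  | nil => exact hRS
  | @cons S S' js a c hj _ ih =>
    have ha : a ∉ R := by simpa using hhead
    refine ih hch.tail (hR.subset_doJump hj hRS ha) ?_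
    cases js with
    | nil => simp
    | cons j t =>
      simpa [(List.isChain_cons_cons.1 hch).1] using fun hc ↦ hj.2.2.2.2.2.2 (hRS hc)

theorem Plays.of_append {Bd S S'' : Pos} {l₁ l₂ : List ((ℤ × ℤ) × (ℤ × ℤ))}
    (h : Plays Bd S (l₁ ++ l₂) S'') : ∃ T, Plays Bd S l₁ T ∧ Plays Bd T l₂ S'' := by
  induction l₁ generalizing S with
  | nil => exact ⟨S, .nil S, h⟩
  | cons j t ih =>
    cases h with
    | cons hj hp =>
      obtain ⟨T, h₁, h₂⟩ := ih hp
      exact ⟨T, .cons hj h₁, h₂⟩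

theorem Plays.eq_of_nil {Bd S S' : Pos} (h : Plays Bd S [] S') : S = S' := by
  cases h; rfl

theorem card_regions_broken_le_length {ι : Type*} [Fintype ι] {Bd : Pos} {R : ι → Pos}
    (hR : ∀ i, IsMersonRegion Bd (R i)) (hdisj : Pairwise (Disjoint on R))
    (moves : List (List ((ℤ × ℤ) × (ℤ × ℤ)))) (hch : ∀ mv ∈ moves, IsChainMove mv)
    {S S' : Pos} (hp : Plays Bd S moves.flatten S') :
    (Finset.univ.filter fun i ↦ R i ⊆ S ∧ ¬ R i ⊆ S').card ≤ moves.length := by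
  classical
  induction moves generalizing S with
  | nil =>
    rw [Plays.eq_of_nil hp]
    simp
  | cons mv ms ih =>
    obtain ⟨T, h₁, h₂⟩ := Plays.of_append hp
    obtain ⟨hne, hchain⟩ := hch mv List.mem_cons_self
    obtain ⟨j, t, rfl⟩ := List.exists_cons_of_ne_nil hne
    have hstart : (Finset.univ.filter fun i ↦ j.1 ∈ R i).card ≤ 1 :=
      Finset.card_le_one.2 fun i hi k hk ↦ by
        by_contra hik
        exact Finset.disjoint_left.1 (hdisj hik) (Finset.mem_filter.1 hi).2
          (Finset.mem_filter.1 hk).2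
    calc (Finset.univ.filter fun i ↦ R i ⊆ S ∧ ¬ R i ⊆ S').card
        ≤ ((Finset.univ.filter fun i ↦ j.1 ∈ R i) ∪
            Finset.univ.filter fun i ↦ R i ⊆ T ∧ ¬ R i ⊆ S').card := by
          refine Finset.card_le_card fun i hi ↦ ?_
          simp only [Finset.mem_filter, Finset.mem_union, Finset.mem_univ, true_and] at hi ⊢
          by_cases hT : R i ⊆ T
          · exact .inr ⟨hT, hi.2⟩
          · exact .inl (by_contra fun hj ↦
              hT ((hR i).subset_of_plays h₁ hchain hi.1 (by simpa using hj)))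
      _ ≤ 1 + ms.length :=
          (Finset.card_union_le _ _).trans
            (add_le_add hstart (ih (fun m hm ↦ hch m (List.mem_cons_of_mem _ hm)) h₂))
      _ = ((j :: t) :: ms).length := by simp [add_comm]

def mersonRegions : Fin 12 → Pos :=
  ![{(0, 0)}, {(0, 5)}, {(5, 0)}, {(5, 5)},
    {(0, 1), (0, 2)}, {(0, 3), (0, 4)}, {(5, 1), (5, 2)}, {(5, 3), (5, 4)},
    {(1, 0), (2, 0)}, {(3, 0), (4, 0)}, {(1, 5), (2, 5)}, {(3, 5), (4, 5)}]

theorem isMersonRegion_mersonRegions (i : Fin 12) : IsMersonRegion board6 (mersonRegions i) := by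
  revert i; unfold IsMersonRegion; decide

theorem pairwise_disjoint_mersonRegions : Pairwise (Disjoint on mersonRegions) := by
  unfold Pairwise; decide

theorem mersonRegions_subset_b2_complement (i : Fin 12) :
    mersonRegions i ⊆ board6.erase (1, 1) := by
  revert i; decide

theorem mersonRegions_not_subset_b2 (i : Fin 12) : ¬ mersonRegions i ⊆ {(1, 1)} := by
  revert i; decide

theorem LegalJump.not_mem_mersonRegions_of_b2_complement {a c : ℤ × ℤ}
    (hj : LegalJump board6 (board6.erase (1, 1)) a c) (i : Fin 12) : a ∉ mersonRegions i := by
  obtain ⟨hs, -, -, hcB, -, -, hcS⟩ := hj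
  obtain rfl : c = (1, 1) := by_contra fun hne ↦ hcS (Finset.mem_erase.2 ⟨hne, hcB⟩)
  rw [← sub_sub_cancel (1, 1) a]
  generalize (1, 1) - a = s at hs
  revert s i; decide

theorem diag_b2_complement_thirteen_moves_general
    (moves : List (List ((ℤ × ℤ) × (ℤ × ℤ))))
    (hch : ∀ mv ∈ moves, IsChainMove mv)
    (hp : Plays board6 (board6.erase ((1 : ℤ), (1 : ℤ))) moves.flatten {((1 : ℤ), (1 : ℤ))}) :
    13 ≤ moves.length := by
  obtain _ | ⟨mv, rest⟩ := moves
  · exact absurd (Plays.eq_of_nil hp) (by decide)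
  obtain ⟨T, h₁, h₂⟩ := Plays.of_append hp
  obtain ⟨hne, hchain⟩ := hch mv List.mem_cons_self
  obtain ⟨⟨a, c⟩, t, rfl⟩ := List.exists_cons_of_ne_nil hne
  have hfirst : LegalJump board6 (board6.erase (1, 1)) a c := by cases h₁; assumption
  have hfull (i : Fin 12) : mersonRegions i ⊆ T :=
    (isMersonRegion_mersonRegions i).subset_of_plays h₁ hchain
      (mersonRegions_subset_b2_complement i)
      (by simpa using hfirst.not_mem_mersonRegions_of_b2_complement i)
  have hbroken := card_regions_broken_le_length isMersonRegion_mersonRegions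
    pairwise_disjoint_mersonRegions rest (fun m hm ↦ hch m (List.mem_cons_of_mem _ hm)) h₂
  rw [Finset.filter_true_of_mem fun i _ ↦ ⟨hfull i, mersonRegions_not_subset_b2 i⟩] at hbroken
  simpa using hbroken

/-- In diagonal peg solitaire on the 6×6 board, any solution to the b2-complement
(vacate b2 = (1,1), finish with a single peg at b2) uses at least 13 moves. -/
theorem diag_b2_complement_thirteen_moves (ℤ' : Unit)
    (moves : List (List ((ℤ × ℤ) × (ℤ × ℤ))))
    (hch : ∀ mv ∈ moves, IsChainMove mv)
    (hp : Plays board6 (board6.erase ((1 : ℤ), (1 : ℤ))) moves.flatten {((1 : ℤ), (1 : ℤ))}) :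
    13 ≤ moves.length :=
  diag_b2_complement_thirteen_moves_general moves hch hp
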